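/- arXiv:1808.01240 — 6 statements merged into one kernel-verified Lean document; each statement's English description precedes it below -/
import Mathlib

section
/- Let p ≥ 1 and let D = diag(δ₁,…,δ_p) and D* = diag(δ₁*,…,δ_p*) be p×p diagonal matrices with strictly positive diagonal entries, let Λ = diag(σ₁,…,σ_p) be a p×p diagonal matrix with strictly positive diagonal entries, and let Ψ and Ψ* be p×p symmetric positive definite matrices whose diagonal entries all equal 1. If D Λ Ψ Λ D = D* Λ Ψ* Λ D*, then D = D* and Ψ = Ψ*. -/
/-!
The diagonal of `D Λ Ψ Λ D` is `(δ σ)²`, because `Ψ` has unit diagonal; positivity then recovers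
`δ σ`, hence `δ`, and dividing the entries by `δᵢ σᵢ σⱼ δⱼ ≠ 0` recovers `Ψ`.
-/

open Matrix

variable {n R : Type*} [Fintype n] [DecidableEq n]

theorem Matrix.diagonal_mul_mul_diagonal_injective_of_diag_eq_one
    [CommRing R] [LinearOrder R] [IsStrictOrderedRing R] {d e : n → R}
    (hd : ∀ i, 0 < d i) (he : ∀ i, 0 < e i) {A B : Matrix n n R}
    (hA : ∀ i, A i i = 1) (hB : ∀ i, B i i = 1)
    (h : diagonal d * A * diagonal d = diagonal e * B * diagonal e) : d = e ∧ A = B := by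
  have hentry (i j : n) : d i * A i j * d j = e i * B i j * e j := by
    simpa only [mul_diagonal, diagonal_mul] using congrFun₂ h i j
  have hde : d = e := funext fun i => by
    have hii := hentry i i
    rw [hA, hB] at hii
    exact (pow_left_inj₀ (hd i).le (he i).le two_ne_zero).1 (by linear_combination hii)
  subst hde
  exact ⟨rfl, ext fun i j => mul_left_cancel₀ (hd i).ne' <|
    mul_right_cancel₀ (hd j).ne' (hentry i j)⟩

theorem Matrix.diagonal_mul_diagonal_mul_mul_diagonal_mul_diagonal [CommSemiring R] (d s : n → R)
    (A : Matrix n n R) :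
    diagonal d * diagonal s * A * diagonal s * diagonal d =
      diagonal (d * s) * A * diagonal (d * s) := by
  rw [mul_assoc _ (diagonal s) (diagonal d), diagonal_mul_diagonal, diagonal_mul_diagonal]
  simp only [mul_comm (s _)]
  rfl

theorem mal_identifiability_general (p : ℕ)
    (δ δstar σ : Fin p → ℝ)
    (hδ : ∀ j, 0 < δ j) (hδstar : ∀ j, 0 < δstar j) (hσ : ∀ j, 0 < σ j)
    (Ψ Ψstar : Matrix (Fin p) (Fin p) ℝ)
    (hΨdiag : ∀ j, Ψ j j = 1) (hΨstardiag : ∀ j, Ψstar j j = 1)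
    (h : diagonal δ * diagonal σ * Ψ * diagonal σ * diagonal δ =
         diagonal δstar * diagonal σ * Ψstar * diagonal σ * diagonal δstar) :
    diagonal δ = diagonal δstar ∧ Ψ = Ψstar := by
  simp only [diagonal_mul_diagonal_mul_mul_diagonal_mul_diagonal] at h
  obtain ⟨hscale, hΨ⟩ := diagonal_mul_mul_diagonal_injective_of_diag_eq_one
    (fun j => mul_pos (hδ j) (hσ j)) (fun j => mul_pos (hδstar j) (hσ j)) hΨdiag hΨstardiag h
  have hδδstar : δ = δstar := funext fun j => mul_right_cancel₀ (hσ j).ne' (congrFun hscale j)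
  exact ⟨congrArg diagonal hδδstar, hΨ⟩

/-- Identifiability of the reparameterized MAL distribution: if
`D Λ Ψ Λ D = D* Λ Ψ* Λ D*` with `D, D*` diagonal with positive entries, `Λ` diagonal with
positive entries, and `Ψ, Ψ*` correlation matrices (symmetric positive definite with unit
diagonal), then `D = D*` and `Ψ = Ψ*`. -/
theorem mal_identifiability (p : ℕ) (hp : 1 ≤ p)
    (δ δstar σ : Fin p → ℝ)
    (hδ : ∀ j, 0 < δ j) (hδstar : ∀ j, 0 < δstar j) (hσ : ∀ j, 0 < σ j)
    (Ψ Ψstar : Matrix (Fin p) (Fin p) ℝ)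
    (hΨ : Ψ.PosDef) (hΨstar : Ψstar.PosDef)
    (hΨdiag : ∀ j, Ψ j j = 1) (hΨstardiag : ∀ j, Ψstar j j = 1)
    (h : diagonal δ * diagonal σ * Ψ * diagonal σ * diagonal δ =
         diagonal δstar * diagonal σ * Ψstar * diagonal σ * diagonal δstar) :
    diagonal δ = diagonal δstar ∧ Ψ = Ψstar :=
  mal_identifiability_general p δ δstar σ hδ hδstar hσ Ψ Ψstar hΨdiag hΨstardiag h
end

section
/- Let τ ∈ (0,1) and δ > 0. Let V be a real random variable with exponential distribution of rate 1/δ (density (1/δ)e^{−v/δ} on (0,∞)) and let Z be a standard normal random variable independent of V. Set ξ = (1 − 2τ)/(τ(1 − τ)) and σ = √(2/(τ(1 − τ))). Then P(ξ V + σ √(δ V) Z < 0) = τ. Equivalently, for any μ ∈ ℝ, the random variable Y = μ + ξ V + σ √(δ V) Z satisfies P(Y < μ) = τ. -/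
/-!
Conditionally on `V = v > 0`, the event `ξ v + σ √(δ v) Z < 0` is `Z < -a √v` with
`a = ξ / (σ √δ)`, so the probability is `∫₀^∞ δ⁻¹ e^{-v/δ} Φ(-a√v) dv`. With `s = √(2/δ + a²)`
the Gaussian density satisfies `e^{-v/δ} φ(a√v) = φ(s√v)`, which makes
`(a/s) Φ(-s√v) - e^{-v/δ} Φ(-a√v)` an explicit antiderivative; hence the probability is
`1/2 - a/(2s) = 1/2 - ξ / (2√(ξ² + 2σ²))`. For the Asymmetric Laplace parameters
`ξ² + 2σ² = (τ(1-τ))⁻²`, so this equals `1/2 - (1 - 2τ)/2 = τ`.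
-/

open MeasureTheory ProbabilityTheory Real Set Filter Topology
open scoped NNReal

namespace ProbabilityTheory

lemma cdf_gaussianReal_eq_integral (μ : ℝ) {v : ℝ≥0} (hv : v ≠ 0) (x : ℝ) :
    cdf (gaussianReal μ v) x = ∫ t in Iic x, gaussianPDFReal μ v t := by
  rw [cdf_eq_real, measureReal_def, gaussianReal_apply_eq_integral μ hv,
    ENNReal.toReal_ofReal (setIntegral_nonneg measurableSet_Iic
      fun t _ => gaussianPDFReal_nonneg μ v t)]

lemma hasDerivAt_cdf_gaussianReal (μ : ℝ) {v : ℝ≥0} (hv : v ≠ 0) (x : ℝ) :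
    HasDerivAt (cdf (gaussianReal μ v)) (gaussianPDFReal μ v x) x := by
  have hint := integrable_gaussianPDFReal μ v
  have hcont : Continuous (gaussianPDFReal μ v) := by
    rw [gaussianPDFReal_def]; fun_prop
  have hcdf : cdf (gaussianReal μ v) =
      fun y => cdf (gaussianReal μ v) 0 + ∫ t in (0 : ℝ)..y, gaussianPDFReal μ v t := by
    ext y
    rw [cdf_gaussianReal_eq_integral μ hv, cdf_gaussianReal_eq_integral μ hv,
      ← intervalIntegral.integral_Iic_sub_Iic hint.integrableOn hint.integrableOn]
    ring
  rw [hcdf]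
  exact (intervalIntegral.integral_hasDerivAt_right hint.intervalIntegrable
    hcont.stronglyMeasurable.stronglyMeasurableAtFilter hcont.continuousAt).const_add _

lemma continuous_cdf_gaussianReal (μ : ℝ) {v : ℝ≥0} (hv : v ≠ 0) :
    Continuous (cdf (gaussianReal μ v)) :=
  continuous_iff_continuousAt.2 fun x => (hasDerivAt_cdf_gaussianReal μ hv x).continuousAt

lemma cdf_gaussianReal_zero {v : ℝ≥0} (hv : v ≠ 0) : cdf (gaussianReal 0 v) 0 = 1 / 2 := by
  have := nullSingletonClass_gaussianReal (μ := 0) hv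
  have hsymm : (gaussianReal 0 v).real (Ioi 0) = (gaussianReal 0 v).real (Iic 0) := by
    conv_rhs => rw [← neg_zero, ← gaussianReal_map_neg]
    rw [map_measureReal_apply measurable_neg measurableSet_Iic, neg_preimage, neg_Iic, neg_zero,
      measureReal_congr Ioi_ae_eq_Ici, neg_zero]
  have htotal := measureReal_add_measureReal_compl (μ := gaussianReal 0 v) measurableSet_Iic
    (s := Iic (0 : ℝ))
  rw [compl_Iic, hsymm, probReal_univ] at htotal
  rw [cdf_eq_real]
  linarith

lemma measure_Iio_eq_ofReal_cdf (μ : Measure ℝ) [IsProbabilityMeasure μ] [NullSingletonClass μ]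
    (x : ℝ) : μ (Iio x) = ENNReal.ofReal (cdf μ x) := by
  rw [ofReal_cdf, measure_congr Iio_ae_eq_Iic]

local notation "Φ" => cdf (gaussianReal 0 1)
local notation "φ" => gaussianPDFReal 0 1

section ExpMixture

lemma gaussianPDFReal_zero_one_eq_mul_exp (x y : ℝ) :
    φ y = φ x * exp (-(y ^ 2 - x ^ 2) / 2) := by
  simp only [gaussianPDFReal_def, NNReal.coe_one, mul_one, sub_zero, mul_assoc, ← exp_add]
  ring_nf

variable {δ : ℝ} (a : ℝ)

noncomputable def expCdfAntideriv (δ a v : ℝ) : ℝ :=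
  a / √(2 / δ + a ^ 2) * Φ (-(√(2 / δ + a ^ 2) * √v)) - exp (-v / δ) * Φ (-(a * √v))

lemma hasDerivAt_expCdfAntideriv (hδ : 0 < δ) {v : ℝ} (hv : 0 < v) :
    HasDerivAt (expCdfAntideriv δ a) (1 / δ * exp (-v / δ) * Φ (-(a * √v))) v := by
  set s := √(2 / δ + a ^ 2)
  have hs : 0 < s := sqrt_pos.2 (by positivity)
  have hs2 : s ^ 2 = 2 / δ + a ^ 2 := sq_sqrt (by positivity)
  have hcdf (c : ℝ) :
      HasDerivAt (fun v => Φ (-(c * √v))) (φ (-(c * √v)) * -(c * (1 / (2 * √v)))) v :=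
    (hasDerivAt_cdf_gaussianReal 0 one_ne_zero _).comp v ((hasDerivAt_sqrt hv.ne').const_mul c).neg
  have hexp : HasDerivAt (fun v => exp (-v / δ)) (exp (-v / δ) * (-1 / δ)) v :=
    ((hasDerivAt_id v).neg.div_const δ).exp
  -- the two Gaussian terms cancel because `e^{-v/δ} φ(-a√v) = φ(-s√v)`
  have hpdf : exp (-v / δ) * φ (-(a * √v)) = φ (-(s * √v)) := by
    rw [gaussianPDFReal_zero_one_eq_mul_exp (-(a * √v)) (-(s * √v)), mul_comm]
    congr 2
    rw [neg_sq, neg_sq, mul_pow, mul_pow, sq_sqrt hv.le, hs2]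
    field_simp
    ring
  refine (((hcdf s).const_mul (a / s)).sub (hexp.mul (hcdf a))).congr_deriv ?_
  rw [← hpdf]
  field_simp
  ring

lemma expCdfAntideriv_zero : expCdfAntideriv δ a 0 = a / (2 * √(2 / δ + a ^ 2)) - 1 / 2 := by
  simp only [expCdfAntideriv, sqrt_zero, mul_zero, neg_zero, zero_div, exp_zero, one_mul]
  rw [cdf_gaussianReal_zero one_ne_zero]
  ring

lemma tendsto_expCdfAntideriv_atTop (hδ : 0 < δ) :
    Tendsto (expCdfAntideriv δ a) atTop (𝓝 0) := by
  have hs : 0 < √(2 / δ + a ^ 2) := sqrt_pos.2 (by positivity)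
  have hΦ : Tendsto (fun v => Φ (-(√(2 / δ + a ^ 2) * √v))) atTop (𝓝 0) :=
    (tendsto_cdf_atBot _).comp
      (tendsto_neg_atTop_atBot.comp (tendsto_sqrt_atTop.const_mul_atTop hs))
  have hexp : Tendsto (fun v => exp (-v / δ)) atTop (𝓝 0) :=
    tendsto_exp_atBot.comp (tendsto_neg_atTop_atBot.atBot_div_const hδ)
  have hbounded : Tendsto (fun v => exp (-v / δ) * Φ (-(a * √v))) atTop (𝓝 0) :=
    squeeze_zero (fun v => mul_nonneg (exp_pos _).le (cdf_nonneg _ _))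
      (fun v => mul_le_of_le_one_right (exp_pos _).le (cdf_le_one _ _)) hexp
  have := (hΦ.const_mul (a / √(2 / δ + a ^ 2))).sub hbounded
  rwa [mul_zero, sub_zero] at this

lemma integrableOn_exp_mul_cdf (hδ : 0 < δ) :
    IntegrableOn (fun v => 1 / δ * exp (-v / δ) * Φ (-(a * √v))) (Ioi 0) := by
  have hexp : IntegrableOn (fun v => 1 / δ * exp (-v / δ)) (Ioi 0) := by
    refine IntegrableOn.congr_fun ((exp_neg_integrableOn_Ioi 0 (inv_pos.2 hδ)).const_mul δ⁻¹)
      (fun v _ => ?_) measurableSet_Ioi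
    ring_nf
  have hΦ := continuous_cdf_gaussianReal 0 one_ne_zero
  refine hexp.mono' (by fun_prop) (ae_of_all _ fun v => ?_)
  rw [norm_mul, norm_of_nonneg (by positivity), norm_of_nonneg (cdf_nonneg _ _)]
  exact mul_le_of_le_one_right (by positivity) (cdf_le_one _ _)

lemma integral_exp_mul_cdf_neg_mul_sqrt (hδ : 0 < δ) :
    ∫ v in Ioi 0, 1 / δ * exp (-v / δ) * Φ (-(a * √v)) = 1 / 2 - a / (2 * √(2 / δ + a ^ 2)) := by
  have hcont : Continuous (expCdfAntideriv δ a) := by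
    have := continuous_cdf_gaussianReal 0 one_ne_zero
    unfold expCdfAntideriv
    fun_prop
  rw [integral_Ioi_of_hasDerivAt_of_tendsto hcont.continuousWithinAt
    (fun v hv => hasDerivAt_expCdfAntideriv a hδ hv) (integrableOn_exp_mul_cdf a hδ)
    (tendsto_expCdfAntideriv_atTop a hδ), expCdfAntideriv_zero]
  ring

end ExpMixture

lemma IndepFun.measure_prodMk_mem_eq_lintegral {Ω α β : Type*} [MeasurableSpace Ω]
    [MeasurableSpace α] [MeasurableSpace β] {P : Measure Ω} [IsFiniteMeasure P]
    {X : Ω → α} {Y : Ω → β} (hindep : IndepFun X Y P) (hX : Measurable X) (hY : Measurable Y)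
    {A : Set (α × β)} (hA : MeasurableSet A) :
    P {ω | (X ω, Y ω) ∈ A} = ∫⁻ x, P.map Y (Prod.mk x ⁻¹' A) ∂(P.map X) := by
  rw [← Measure.prod_apply hA, ← (indepFun_iff_map_prod_eq_prod_map_map hX.aemeasurable
    hY.aemeasurable).mp hindep, Measure.map_apply (hX.prodMk hY) hA]
  rfl

lemma setOf_mul_add_mul_sqrt_mul_lt_zero {ξ σ δ v : ℝ} (hσ : 0 < σ) (hδ : 0 < δ) (hv : 0 < v) :
    {z : ℝ | ξ * v + σ * √(δ * v) * z < 0} = Iio (-(ξ / (σ * √δ) * √v)) := by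
  have hscale : 0 < σ * √δ * √v := by positivity
  have hfactor (z : ℝ) :
      ξ * v + σ * √(δ * v) * z = σ * √δ * √v * (z + ξ / (σ * √δ) * √v) := by
    rw [sqrt_mul hδ.le]
    field_simp
    linear_combination (-ξ) * sq_sqrt hv.le
  ext z
  show ξ * v + σ * √(δ * v) * z < 0 ↔ z < -(ξ / (σ * √δ) * √v)
  rw [hfactor, lt_neg_iff_add_neg]
  exact ⟨fun h => neg_of_mul_neg_right h hscale.le, mul_neg_of_pos_of_neg hscale⟩

lemma div_two_mul_sqrt_two_div_add_sq {ξ σ δ : ℝ} (hσ : 0 < σ) (hδ : 0 < δ) :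
    ξ / (σ * √δ) / (2 * √(2 / δ + (ξ / (σ * √δ)) ^ 2)) = ξ / (2 * √(ξ ^ 2 + 2 * σ ^ 2)) := by
  have hscale : 0 < σ * √δ := by positivity
  have hsum : 2 / δ + (ξ / (σ * √δ)) ^ 2 = (ξ ^ 2 + 2 * σ ^ 2) / (σ * √δ) ^ 2 := by
    rw [div_pow, mul_pow, sq_sqrt hδ.le]
    field_simp
    ring
  rw [hsum, sqrt_div' _ (sq_nonneg _), sqrt_sq hscale.le]
  field_simp

theorem measure_mul_add_mul_sqrt_mul_lt_zero {Ω : Type*} [MeasurableSpace Ω] {P : Measure Ω}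
    [IsProbabilityMeasure P] {δ ξ σ : ℝ} (hδ : 0 < δ) (hσ : 0 < σ) {V Z : Ω → ℝ}
    (hV : Measurable V) (hZ : Measurable Z)
    (hVlaw : P.map V =
      volume.withDensity (fun v => ENNReal.ofReal (if 0 < v then 1 / δ * exp (-v / δ) else 0)))
    (hZlaw : P.map Z = gaussianReal 0 1) (hindep : IndepFun V Z P) :
    P {ω | ξ * V ω + σ * √(δ * V ω) * Z ω < 0} =
      ENNReal.ofReal (1 / 2 - ξ / (2 * √(ξ ^ 2 + 2 * σ ^ 2))) := by
  set a := ξ / (σ * √δ)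
  set A : Set (ℝ × ℝ) := {p | ξ * p.1 + σ * √(δ * p.1) * p.2 < 0}
  have hA : MeasurableSet A := measurableSet_lt (by fun_prop) measurable_const
  have hslice (v : ℝ) :
      ENNReal.ofReal (if 0 < v then 1 / δ * exp (-v / δ) else 0) *
          gaussianReal 0 1 (Prod.mk v ⁻¹' A) =
        (Ioi 0).indicator (fun v => ENNReal.ofReal (1 / δ * exp (-v / δ) * Φ (-(a * √v)))) v := by
    have := nullSingletonClass_gaussianReal (μ := 0) one_ne_zero
    by_cases hv : 0 < v
    · rw [if_pos hv, indicator_of_mem (mem_Ioi.2 hv),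
        ENNReal.ofReal_mul (p := 1 / δ * exp (-v / δ)) (by positivity),
        ← measure_Iio_eq_ofReal_cdf, ← setOf_mul_add_mul_sqrt_mul_lt_zero hσ hδ hv]
      rfl
    · rw [if_neg hv, indicator_of_notMem (mt mem_Ioi.1 hv), ENNReal.ofReal_zero, zero_mul]
  calc P {ω | ξ * V ω + σ * √(δ * V ω) * Z ω < 0}
      = ∫⁻ v, gaussianReal 0 1 (Prod.mk v ⁻¹' A) ∂(P.map V) := by
        rw [← hZlaw]
        exact hindep.measure_prodMk_mem_eq_lintegral hV hZ hA
    _ = ∫⁻ v in Ioi 0, ENNReal.ofReal (1 / δ * exp (-v / δ) * Φ (-(a * √v))) := by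
        rw [hVlaw, lintegral_withDensity_eq_lintegral_mul _
          (Measurable.ite measurableSet_Ioi (by fun_prop) measurable_const).ennreal_ofReal
          (measurable_measure_prodMk_left hA), ← lintegral_indicator measurableSet_Ioi]
        simp only [Pi.mul_apply, hslice]
    _ = ENNReal.ofReal (∫ v in Ioi 0, 1 / δ * exp (-v / δ) * Φ (-(a * √v))) :=
        (ofReal_integral_eq_lintegral_ofReal (integrableOn_exp_mul_cdf a hδ)
          (ae_of_all _ fun v => mul_nonneg (by positivity) (cdf_nonneg _ _))).symm
    _ = ENNReal.ofReal (1 / 2 - ξ / (2 * √(ξ ^ 2 + 2 * σ ^ 2))) := by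
        rw [integral_exp_mul_cdf_neg_mul_sqrt a hδ, div_two_mul_sqrt_two_div_add_sq hσ hδ]

end ProbabilityTheory

/-- The quantile property of the Gaussian location-scale mixture representation of the
Asymmetric Laplace distribution: if `V ~ Exp(1/δ)` (density `(1/δ)e^{-v/δ}` on `(0,∞)`),
`Z ~ N(0,1)` independent of `V`, `ξ = (1-2τ)/(τ(1-τ))` and `σ = √(2/(τ(1-τ)))`, then
`P(ξV + σ√(δV) Z < 0) = τ`, and for every `μ`, `Y = μ + ξV + σ√(δV) Z` satisfies
`P(Y < μ) = τ`. -/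
theorem al_mixture_quantile {Ω : Type*} [MeasurableSpace Ω]
    (P : Measure Ω) [IsProbabilityMeasure P]
    (τ δ : ℝ) (hτ : τ ∈ Set.Ioo (0 : ℝ) 1) (hδ : 0 < δ)
    (V Z : Ω → ℝ) (hV : Measurable V) (hZ : Measurable Z)
    (hVlaw : P.map V =
      volume.withDensity (fun v => ENNReal.ofReal (if 0 < v then (1 / δ) * exp (-v / δ) else 0)))
    (hZlaw : P.map Z = gaussianReal 0 1)
    (hindep : IndepFun V Z P)
    (ξ σ : ℝ)
    (hξ : ξ = (1 - 2 * τ) / (τ * (1 - τ)))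
    (hσ : σ = Real.sqrt (2 / (τ * (1 - τ)))) :
    P {ω | ξ * V ω + σ * Real.sqrt (δ * V ω) * Z ω < 0} = ENNReal.ofReal τ ∧
      ∀ μ : ℝ, P {ω | μ + ξ * V ω + σ * Real.sqrt (δ * V ω) * Z ω < μ} = ENNReal.ofReal τ := by
  obtain ⟨hτ0, hτ1⟩ := hτ
  have hvar : 0 < τ * (1 - τ) := mul_pos hτ0 (by linarith)
  have hσpos : 0 < σ := hσ ▸ sqrt_pos.2 (by positivity)
  have hlevel : 1 / 2 - ξ / (2 * √(ξ ^ 2 + 2 * σ ^ 2)) = τ := by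
    have hsum : ξ ^ 2 + 2 * σ ^ 2 = (1 / (τ * (1 - τ))) ^ 2 := by
      rw [hσ, sq_sqrt (by positivity), hξ]
      field_simp
      ring
    rw [hsum, sqrt_sq (by positivity), hξ]
    field_simp
    ring
  have hlt := measure_mul_add_mul_sqrt_mul_lt_zero (ξ := ξ) hδ hσpos hV hZ hVlaw hZlaw hindep
  rw [hlevel] at hlt
  refine ⟨hlt, fun μ => ?_⟩
  simpa only [add_assoc, add_lt_iff_neg_left] using hlt
end

section
/- Let τ ∈ (0,1), δ > 0, μ ∈ ℝ. Let V be exponentially distributed with rate 1/δ and Z an independent standard normal variable, and set ξ = (1 − 2τ)/(τ(1 − τ)) and σ = √(2/(τ(1 − τ))). Then the law of Y = μ + ξ V + σ √(δ V) Z is absolutely continuous with density f_AL(y; μ, δ, τ) = (τ(1 − τ)/δ) · exp(−ρ_τ((y − μ)/δ)), where ρ_τ(x) = x(τ − 1{x<0}). -/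
/-!
Conditionally on `V = v`, `Y` is Gaussian with mean `μ + ξ v` and variance `σ² δ v`, so `Y` has
the density `y ↦ ∫₀^∞ δ⁻¹ e^{-v/δ} φ(y; μ + ξ v, σ² δ v) dv`. Completing the square in the
exponent (where `4τ(1-τ) + (1-2τ)² = 1` collapses the coefficient of `v` to `1/(4δτ(1-τ))`)
reduces this to `∫₀^∞ v^{-1/2} e^{-p/v - q v} dv = √(π/q) e^{-2√(pq)}`. That integral follows from
the substitution `u = √q √v - √p / √v` onto the Gaussian integral: the two halves of its Jacobian
are exchanged by `v ↦ p / (q v)`, which preserves `p / v + q v = u² + 2√(pq)`.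
-/

open MeasureTheory ProbabilityTheory Real

noncomputable def checkLoss (τ x : ℝ) : ℝ := x * (τ - if x < 0 then 1 else 0)

open Set ENNReal

lemma gaussianReal_map_const_add_mul (m c : ℝ) :
    (gaussianReal 0 1).map (fun z => m + c * z) = gaussianReal m (.mk (c ^ 2) (sq_nonneg c)) := by
  have hcomp : (fun z => m + c * z) = (m + ·) ∘ (c * ·) := rfl
  rw [hcomp, ← Measure.map_map (measurable_const_add m) (measurable_const_mul c),
    gaussianReal_map_const_mul, gaussianReal_map_const_add]
  simp

theorem map_prod_gaussianReal_eq_withDensity {α : Type*} [MeasurableSpace α] {ν : Measure α}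
    [SFinite ν] {m c : α → ℝ} (hm : Measurable m) (hc : Measurable c) (hc0 : ∀ᵐ v ∂ν, c v ≠ 0) :
    (ν.prod (gaussianReal 0 1)).map (fun x => m x.1 + c x.1 * x.2) =
      volume.withDensity (fun y => ∫⁻ v, gaussianPDF (m v) (.mk (c v ^ 2) (sq_nonneg _)) y ∂ν) := by
  have hg : Measurable (fun x : α × ℝ => m x.1 + c x.1 * x.2) := by fun_prop
  have hpdf : Measurable fun p : ℝ × α =>
      gaussianPDF (m p.2) (.mk (c p.2 ^ 2) (sq_nonneg _)) p.1 :=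
    measurable_uncurry_gaussianPDF.comp ((hm.comp measurable_snd).prodMk
      (((hc.comp measurable_snd).pow_const 2).subtype_mk.prodMk measurable_fst))
  ext s hs
  rw [Measure.map_apply hg hs, Measure.prod_apply (hg hs), withDensity_apply _ hs,
    lintegral_lintegral_swap hpdf.aemeasurable]
  refine lintegral_congr_ae ?_
  filter_upwards [hc0] with v hv
  rw [← gaussianReal_apply _ (by simpa [← NNReal.coe_ne_zero] using hv),
    ← gaussianReal_map_const_add_mul, Measure.map_apply (by fun_prop) hs]
  rfl

lemma lintegral_Ioi_comp_div {c : ℝ} (hc : 0 < c) (g : ℝ → ℝ≥0∞) :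
    ∫⁻ v in Ioi 0, ENNReal.ofReal (c / v ^ 2) * g (c / v) = ∫⁻ v in Ioi 0, g v := by
  have hderiv : ∀ v ∈ Ioi (0 : ℝ), HasDerivWithinAt (c / ·) (-(c / v ^ 2)) (Ioi 0) v := by
    intro v hv
    simpa [div_eq_mul_inv] using ((hasDerivAt_inv (ne_of_gt hv)).const_mul c).hasDerivWithinAt
  have hinj : InjOn (c / ·) (Ioi (0 : ℝ)) := fun _ _ _ _ hab => by
    simpa [div_eq_mul_inv, hc.ne'] using hab
  have himage : (c / ·) '' Ioi (0 : ℝ) = Ioi 0 := by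
    refine Subset.antisymm (image_subset_iff.2 fun v hv => div_pos hc hv) fun v hv => ?_
    exact ⟨c / v, div_pos hc hv, div_div_cancel₀ hc.ne'⟩
  have hcov := lintegral_image_eq_lintegral_abs_deriv_mul measurableSet_Ioi hderiv hinj g
  rw [himage] at hcov
  rw [hcov]
  refine setLIntegral_congr_fun measurableSet_Ioi fun v hv => ?_
  rw [abs_neg, abs_of_pos (div_pos hc (pow_pos hv 2))]

lemma lintegral_exp_neg_sq : ∫⁻ u : ℝ, ENNReal.ofReal (exp (-u ^ 2)) = ENNReal.ofReal √π := by
  rw [← ofReal_integral_eq_lintegral_ofReal (by simpa using integrable_exp_neg_mul_sq one_pos)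
    (ae_of_all _ fun _ => (exp_pos _).le)]
  simpa using congrArg ENNReal.ofReal (integral_gaussian 1)

lemma hasDerivAt_mul_sqrt_sub_div_sqrt (a b : ℝ) {v : ℝ} (hv : 0 < v) :
    HasDerivAt (fun v => a * √v - b / √v) ((a / √v + b / (v * √v)) / 2) v := by
  have hsqrt : HasDerivAt (√·) (1 / (2 * √v)) v := hasDerivAt_sqrt hv.ne'
  have hs : √v ≠ 0 := (sqrt_pos.2 hv).ne'
  refine ((hsqrt.const_mul a).sub ((hasDerivAt_const v b).div hsqrt hs)).congr_deriv ?_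
  rw [sq_sqrt hv.le]
  field_simp
  ring

lemma strictMonoOn_mul_sqrt_sub_div_sqrt {a b : ℝ} (ha : 0 < a) (hb : 0 ≤ b) :
    StrictMonoOn (fun v => a * √v - b / √v) (Ioi 0) := by
  intro v hv w _ hvw
  have hs : √v < √w := sqrt_lt_sqrt (le_of_lt hv) hvw
  have : b / √w ≤ b / √v := div_le_div_of_nonneg_left hb (sqrt_pos.2 hv) hs.le
  simp only
  nlinarith

lemma image_mul_sqrt_sub_div_sqrt {a b : ℝ} (ha : 0 < a) (hb : 0 < b) :
    (fun v => a * √v - b / √v) '' Ioi 0 = univ := by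
  refine eq_univ_of_forall fun u => ?_
  -- `w` is the positive root of `a w ^ 2 - u w - b = 0`
  set s := √(u ^ 2 + 4 * a * b)
  have hs : s ^ 2 = u ^ 2 + 4 * a * b := sq_sqrt (by positivity)
  have hus : -u < s := by nlinarith [sqrt_nonneg (u ^ 2 + 4 * a * b), neg_abs_le u, sq_abs u]
  set w := (u + s) / (2 * a)
  have hw : 0 < w := div_pos (by linarith) (by positivity)
  refine ⟨w ^ 2, pow_pos hw 2, ?_⟩
  have h2aw : 2 * a * w = u + s := by simp only [w]; field_simp
  have hquad : a * w ^ 2 - u * w - b = 0 := by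
    have : 4 * a * (a * w ^ 2 - u * w - b) = 0 := by
      linear_combination (2 * a * w + s - u) * h2aw + hs
    simpa [ha.ne'] using this
  simp only [sqrt_sq hw.le]
  field_simp
  linarith

theorem lintegral_Ioi_inv_sqrt_mul_exp_neg_div_sub_mul {p q : ℝ} (hp : 0 < p) (hq : 0 < q) :
    ∫⁻ v in Ioi 0, ENNReal.ofReal ((√v)⁻¹ * exp (-(p / v) - q * v)) =
      ENNReal.ofReal (√(π / q) * exp (-(2 * √(p * q)))) := by
  set a := √q
  set b := √p
  have ha : 0 < a := sqrt_pos.2 hq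
  have hb : 0 < b := sqrt_pos.2 hp
  have haq : a ^ 2 = q := sq_sqrt hq.le
  have hbp : b ^ 2 = p := sq_sqrt hp.le
  set e : ℝ → ℝ := fun v => exp (-(p / v) - q * v)
  set I := ∫⁻ v in Ioi 0, ENNReal.ofReal ((√v)⁻¹ * e v)
  have hI : ∫⁻ v in Ioi 0, ENNReal.ofReal (a / √v * e v) = ENNReal.ofReal a * I := by
    rw [← lintegral_const_mul' _ _ ofReal_ne_top]
    refine setLIntegral_congr_fun measurableSet_Ioi fun v hv => ?_
    rw [← ofReal_mul ha.le, div_eq_mul_inv, mul_assoc]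
  -- the substitution `v ↦ p / (q v)` preserves `e` and exchanges the two halves of the Jacobian
  have hsymm : ∫⁻ v in Ioi 0, ENNReal.ofReal (b / (v * √v) * e v) = ENNReal.ofReal a * I := by
    rw [← hI, ← lintegral_Ioi_comp_div (div_pos hp hq)]
    refine setLIntegral_congr_fun measurableSet_Ioi fun v (hv : 0 < v) => ?_
    have hsv : 0 < √v := sqrt_pos.2 hv
    rw [← ofReal_mul (by positivity)]
    congr 1
    have he : e (p / q / v) = e v := by
      simp only [e]
      congr 1
      field_simp
      ring
    rw [he, sqrt_div' _ hv.le, sqrt_div' _ hq.le]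
    field_simp
    rw [sq_sqrt hv.le]
    ring
  have hcov : ENNReal.ofReal √π = ENNReal.ofReal (exp (2 * a * b) / 2) *
      ((∫⁻ v in Ioi 0, ENNReal.ofReal (a / √v * e v)) +
        ∫⁻ v in Ioi 0, ENNReal.ofReal (b / (v * √v) * e v)) := by
    rw [← lintegral_exp_neg_sq, ← setLIntegral_univ, ← image_mul_sqrt_sub_div_sqrt ha hb,
      lintegral_image_eq_lintegral_abs_deriv_mul measurableSet_Ioi
        (fun v hv => (hasDerivAt_mul_sqrt_sub_div_sqrt a b hv).hasDerivWithinAt)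
        ((strictMonoOn_mul_sqrt_sub_div_sqrt ha hb.le).injOn),
      ← lintegral_add_left (by fun_prop), ← lintegral_const_mul' _ _ ofReal_ne_top]
    refine setLIntegral_congr_fun measurableSet_Ioi fun v (hv : 0 < v) => ?_
    have hsv : 0 < √v := sqrt_pos.2 hv
    have hexp : exp (-(a * √v - b / √v) ^ 2) = exp (2 * a * b) * e v := by
      rw [← exp_add]
      congr 1
      have hab : (a * √v - b / √v) ^ 2 = q * v + p / v - 2 * a * b := by
        rw [sub_sq, mul_pow, div_pow, sq_sqrt hv.le, haq, hbp]
        field_simp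
        ring
      rw [hab]
      ring
    rw [abs_of_pos (by positivity), hexp, ← ofReal_add (by positivity) (by positivity),
      ← ofReal_mul (by positivity), ← ofReal_mul (by positivity)]
    congr 1
    ring
  rw [hI, hsymm, ← two_mul, ← mul_assoc, ← mul_assoc, ← ofReal_ofNat 2,
    ← ofReal_mul (by positivity), ← ofReal_mul (by positivity)] at hcov
  have hpos : 0 < exp (2 * a * b) / 2 * 2 * a := by positivity
  rw [eq_comm, ← ENNReal.eq_div_iff (by simpa using hpos) ofReal_ne_top,
    ← ofReal_div_of_pos hpos] at hcov
  rw [hcov, sqrt_div' _ hq.le, sqrt_mul hp.le, exp_neg]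
  congr 1
  field_simp
  ring

lemma checkLoss_eq_abs_sub_mul_div_two (τ x : ℝ) : checkLoss τ x = (|x| - (1 - 2 * τ) * x) / 2 := by
  unfold checkLoss
  split_ifs with hx
  · rw [abs_of_neg hx]; ring
  · rw [abs_of_nonneg (not_lt.1 hx)]; ring

section AsymmetricLaplace

variable {τ δ : ℝ}

lemma exponential_mul_gaussianPDFReal_eq (hτ : τ ∈ Ioo 0 1) (hδ : 0 < δ) (μ y : ℝ) {v : ℝ}
    (hv : 0 < v) :
    1 / δ * exp (-v / δ) * gaussianPDFReal (μ + (1 - 2 * τ) / (τ * (1 - τ)) * v)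
        (.mk ((√(2 / (τ * (1 - τ))) * √(δ * v)) ^ 2) (sq_nonneg _)) y =
      √(τ * (1 - τ)) / (2 * δ * √(π * δ)) * exp ((y - μ) * (1 - 2 * τ) / (2 * δ)) *
        ((√v)⁻¹ * exp (-((y - μ) ^ 2 * (τ * (1 - τ)) / (4 * δ) / v) -
          1 / (4 * δ * (τ * (1 - τ))) * v)) := by
  obtain ⟨hτ0, hτ1⟩ := hτ
  have ht : 0 < τ * (1 - τ) := mul_pos hτ0 (by linarith)
  set t := τ * (1 - τ) with ht_def
  have hvar : (√(2 / t) * √(δ * v)) ^ 2 = 2 * δ * v / t := by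
    rw [mul_pow, sq_sqrt (by positivity), sq_sqrt (by positivity)]
    ring
  simp only [gaussianPDFReal, NNReal.coe_mk, hvar]
  have hsqrt : √(2 * π * (2 * δ * v / t)) = 2 * √(π * δ) * √v / √t := by
    rw [show 2 * π * (2 * δ * v / t) = 2 ^ 2 * (π * δ * v) / t by ring, sqrt_div' _ ht.le,
      sqrt_mul (by positivity), sqrt_mul' _ hv.le, sqrt_sq zero_le_two, mul_assoc]
  have hexp : -v / δ + -(y - (μ + (1 - 2 * τ) / t * v)) ^ 2 / (2 * (2 * δ * v / t)) =
      (y - μ) * (1 - 2 * τ) / (2 * δ) +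
        (-((y - μ) ^ 2 * t / (4 * δ) / v) - 1 / (4 * δ * t) * v) := by
    field_simp
    ring
  rw [hsqrt, mul_mul_mul_comm, ← exp_add, hexp, exp_add]
  field_simp

lemma lintegral_exponential_mul_gaussianPDF (hτ : τ ∈ Ioo 0 1) (hδ : 0 < δ) {μ y : ℝ}
    (hy : y ≠ μ) :
    ∫⁻ v in Ioi 0, ENNReal.ofReal (1 / δ * exp (-v / δ)) *
        gaussianPDF (μ + (1 - 2 * τ) / (τ * (1 - τ)) * v)
          (.mk ((√(2 / (τ * (1 - τ))) * √(δ * v)) ^ 2) (sq_nonneg _)) y =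
      ENNReal.ofReal (τ * (1 - τ) / δ * exp (-checkLoss τ ((y - μ) / δ))) := by
  have ht : 0 < τ * (1 - τ) := mul_pos hτ.1 (by linarith [hτ.2])
  have hyμ : 0 < |y - μ| := abs_pos.2 (sub_ne_zero.2 hy)
  rw [setLIntegral_congr_fun measurableSet_Ioi fun v (hv : 0 < v) => by
      rw [gaussianPDF, ← ofReal_mul (by positivity),
        exponential_mul_gaussianPDFReal_eq hτ hδ μ y hv, ofReal_mul (by positivity)],
    lintegral_const_mul' _ _ ofReal_ne_top,
    lintegral_Ioi_inv_sqrt_mul_exp_neg_div_sub_mul (by positivity) (by positivity),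
    ← ofReal_mul (by positivity)]
  congr 1
  set t := τ * (1 - τ)
  have hsqrt_q : √(π / (1 / (4 * δ * t))) = 2 * √(π * δ) * √t := by
    rw [div_div_eq_mul_div, div_one, show π * (4 * δ * t) = 2 ^ 2 * (π * δ) * t by ring,
      sqrt_mul (by positivity), sqrt_mul (by positivity), sqrt_sq zero_le_two]
  have hsqrt_pq : √((y - μ) ^ 2 * t / (4 * δ) * (1 / (4 * δ * t))) = |y - μ| / (4 * δ) := by
    rw [← sqrt_sq (by positivity : 0 ≤ |y - μ| / (4 * δ))]
    congr 1
    rw [div_pow, sq_abs]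
    field_simp
  rw [hsqrt_q, hsqrt_pq, checkLoss_eq_abs_sub_mul_div_two, abs_div, abs_of_pos hδ]
  have hexp : exp ((y - μ) * (1 - 2 * τ) / (2 * δ)) * exp (-(2 * (|y - μ| / (4 * δ)))) =
      exp (-((|y - μ| / δ - (1 - 2 * τ) * ((y - μ) / δ)) / 2)) := by
    rw [← exp_add]
    congr 1
    ring
  have hs : 0 < √(π * δ) := by positivity
  rw [← hexp]
  field_simp
  exact sq_sqrt ht.le

end AsymmetricLaplace

/-- Gaussian location-scale mixture representation of the univariate Asymmetric Laplace
distribution: if `V ~ Exp(1/δ)`, `Z ~ N(0,1)` independent of `V`,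
`ξ = (1-2τ)/(τ(1-τ))`, `σ = √(2/(τ(1-τ)))`, then `Y = μ + ξV + σ√(δV) Z` has the
Asymmetric Laplace density `f_AL(y; μ, δ, τ) = (τ(1-τ)/δ) exp(-ρ_τ((y-μ)/δ))`. -/
theorem al_mixture_density {Ω : Type*} [MeasurableSpace Ω]
    (P : Measure Ω) [IsProbabilityMeasure P]
    (τ δ μ : ℝ) (hτ : τ ∈ Set.Ioo (0 : ℝ) 1) (hδ : 0 < δ)
    (V Z : Ω → ℝ) (hV : Measurable V) (hZ : Measurable Z)
    (hVlaw : P.map V =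
      volume.withDensity (fun v => ENNReal.ofReal (if 0 < v then (1 / δ) * exp (-v / δ) else 0)))
    (hZlaw : P.map Z = gaussianReal 0 1)
    (hindep : IndepFun V Z P)
    (ξ σ : ℝ)
    (hξ : ξ = (1 - 2 * τ) / (τ * (1 - τ)))
    (hσ : σ = Real.sqrt (2 / (τ * (1 - τ))))
    (Y : Ω → ℝ) (hY : ∀ ω, Y ω = μ + ξ * V ω + σ * Real.sqrt (δ * V ω) * Z ω) :
    P.map Y = volume.withDensity
      (fun y => ENNReal.ofReal (τ * (1 - τ) / δ * exp (-(checkLoss τ ((y - μ) / δ))))) := by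
  subst hξ hσ
  have hexponential : (fun v => ENNReal.ofReal (if 0 < v then 1 / δ * exp (-v / δ) else 0)) =
      (Ioi 0).indicator fun v => ENNReal.ofReal (1 / δ * exp (-v / δ)) := by
    ext v
    by_cases hv : 0 < v <;> simp [hv]
  rw [hexponential, withDensity_indicator measurableSet_Ioi] at hVlaw
  have hYlaw : P.map Y = ((P.map V).prod (P.map Z)).map
      fun x => (μ + (1 - 2 * τ) / (τ * (1 - τ)) * x.1) +
        √(2 / (τ * (1 - τ))) * √(δ * x.1) * x.2 := by
    rw [← hindep.map_prod_eq_prod_map_map hV.aemeasurable hZ.aemeasurable,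
      Measure.map_map (by fun_prop) (hV.prodMk hZ)]
    exact congrArg P.map (funext hY)
  rw [hYlaw, hVlaw, hZlaw]
  refine (map_prod_gaussianReal_eq_withDensity (m := fun v => μ + (1 - 2 * τ) / (τ * (1 - τ)) * v)
    (c := fun v => √(2 / (τ * (1 - τ))) * √(δ * v)) (by fun_prop) (by fun_prop) ?_).trans ?_
  · rw [ae_withDensity_iff (by fun_prop)]
    filter_upwards [ae_restrict_mem measurableSet_Ioi] with v (hv : 0 < v) _
    have ht : 0 < τ * (1 - τ) := mul_pos hτ.1 (sub_pos.2 hτ.2)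
    positivity
  · refine withDensity_congr_ae ?_
    filter_upwards [volume.ae_ne μ] with y hy
    rw [lintegral_withDensity_eq_lintegral_mul _ (by fun_prop) (by fun_prop)]
    exact lintegral_exponential_mul_gaussianPDF hτ hδ hy
end

section
/- Let τ ∈ (0,1), δ > 0, μ ∈ ℝ, and let Y be a real random variable with density f_AL(y; μ, δ, τ) = (τ(1 − τ)/δ) exp(−ρ_τ((y − μ)/δ)), where ρ_τ(x) = x(τ − 1{x<0}). Then the random variable ρ_τ((Y − μ)/δ) is exponentially distributed with rate 1, i.e., the pushforward of the law of Y under the map y ↦ ρ_τ((y − μ)/δ) is the standard exponential distribution: for every t ≥ 0, P(ρ_τ((Y − μ)/δ) > t) = e^{−t}. -/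
open MeasureTheory Real

/-! The check loss is `(τ - 1) x` on the negative half-line and `τ x` on the positive one, so
`{ρ_τ > t}` is the union of the tails `x < -t/(1-τ)` and `x > t/τ`. After the substitution
`x = (y - μ)/δ` the density becomes `τ(1-τ) e^{-ρ_τ(x)}`, whose integrals over these two tails are
`τ e^{-t}` and `(1-τ) e^{-t}`. -/

open Set

lemma checkLoss_of_neg {τ x : ℝ} (hx : x < 0) : checkLoss τ x = -((1 - τ) * x) := by
  rw [checkLoss, if_pos hx]; ring

lemma checkLoss_of_nonneg {τ x : ℝ} (hx : 0 ≤ x) : checkLoss τ x = τ * x := by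
  rw [checkLoss, if_neg hx.not_gt]; ring

lemma setOf_lt_checkLoss {τ t : ℝ} (hτ : τ ∈ Ioo (0 : ℝ) 1) (ht : 0 ≤ t) :
    {x | t < checkLoss τ x} = Iio (-(t / (1 - τ))) ∪ Ioi (t / τ) := by
  obtain ⟨hτ0, hτ1⟩ := hτ
  have h1τ : 0 < 1 - τ := sub_pos.mpr hτ1
  ext x
  simp only [mem_ofPred_eq, mem_union, mem_Iio, mem_Ioi]
  rcases lt_or_ge x 0 with hx | hx
  · rw [or_iff_left (not_lt.mpr (hx.le.trans (div_nonneg ht hτ0.le))), checkLoss_of_neg hx,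
      ← neg_div, lt_div_iff₀ h1τ]
    constructor <;> intro <;> linarith
  · rw [or_iff_right (not_lt.mpr ((neg_nonpos.mpr (div_nonneg ht h1τ.le)).trans hx)),
      checkLoss_of_nonneg hx, div_lt_iff₀' hτ0]

lemma setLIntegral_Ioi_ofReal_exp_mul {a : ℝ} (ha : a < 0) (c : ℝ) :
    ∫⁻ x in Ioi c, ENNReal.ofReal (exp (a * x)) = ENNReal.ofReal (-exp (a * c) / a) := by
  rw [← ofReal_integral_eq_lintegral_ofReal (integrableOn_exp_mul_Ioi ha c)
    (ae_of_all _ fun _ => (exp_pos _).le), integral_exp_mul_Ioi ha]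

lemma setLIntegral_Iio_ofReal_exp_mul {a : ℝ} (ha : 0 < a) (c : ℝ) :
    ∫⁻ x in Iio c, ENNReal.ofReal (exp (a * x)) = ENNReal.ofReal (exp (a * c) / a) := by
  rw [setLIntegral_congr Iio_ae_eq_Iic, ← ofReal_integral_eq_lintegral_ofReal
    (integrableOn_exp_mul_Iic ha c) (ae_of_all _ fun _ => (exp_pos _).le), integral_exp_mul_Iic ha]

lemma map_volume_sub_div {δ : ℝ} (hδ : 0 < δ) (μ : ℝ) :
    volume.map (fun y : ℝ => (y - μ) / δ) = ENNReal.ofReal δ • volume := by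
  have : (fun y : ℝ => (y - μ) / δ) = (· * δ⁻¹) ∘ (· - μ) := by ext; simp [div_eq_mul_inv]
  rw [this, ← Measure.map_map (measurable_mul_const _) (measurable_sub_const _),
    map_sub_right_eq_self, Real.map_volume_mul_right (inv_ne_zero hδ.ne'), inv_inv,
    abs_of_pos hδ]

lemma setLIntegral_comp_sub_div {δ : ℝ} (hδ : 0 < δ) (μ : ℝ) (f : ℝ → ENNReal) (s : Set ℝ) :
    ∫⁻ y in (fun y => (y - μ) / δ) ⁻¹' s, f ((y - μ) / δ) =
      ENNReal.ofReal δ * ∫⁻ x in s, f x := by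
  have hemb : MeasurableEmbedding (fun y : ℝ => (y - μ) / δ) := by
    simpa [Function.comp_def, div_eq_mul_inv] using
      (measurableEmbedding_mulRight₀ (inv_ne_zero hδ.ne')).comp (measurableEmbedding_subRight μ)
  have hφ : MeasurePreserving (fun y : ℝ => (y - μ) / δ) volume (ENNReal.ofReal δ • volume) :=
    ⟨hemb.measurable, map_volume_sub_div hδ μ⟩
  rw [hφ.setLIntegral_comp_preimage_emb hemb, Measure.restrict_smul, lintegral_smul_measure,
    smul_eq_mul]

lemma setLIntegral_exp_neg_checkLoss_tail {τ t : ℝ} (hτ : τ ∈ Ioo (0 : ℝ) 1) (ht : 0 ≤ t) :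
    ∫⁻ x in {x | t < checkLoss τ x}, ENNReal.ofReal (exp (-checkLoss τ x)) =
      ENNReal.ofReal (exp (-t) / (τ * (1 - τ))) := by
  obtain ⟨hτ0, hτ1⟩ := hτ
  have h1τ : 0 < 1 - τ := sub_pos.mpr hτ1
  have hleft : -(t / (1 - τ)) ≤ 0 := neg_nonpos.mpr (div_nonneg ht h1τ.le)
  have hright : 0 ≤ t / τ := div_nonneg ht hτ0.le
  have hlower : ∫⁻ x in Iio (-(t / (1 - τ))), ENNReal.ofReal (exp (-checkLoss τ x)) =
      ENNReal.ofReal (exp (-t) / (1 - τ)) := by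
    rw [setLIntegral_congr_fun measurableSet_Iio fun x hx => by
        rw [checkLoss_of_neg (hx.trans_le hleft), neg_neg],
      setLIntegral_Iio_ofReal_exp_mul h1τ]
    congr 3
    field_simp
  have hupper : ∫⁻ x in Ioi (t / τ), ENNReal.ofReal (exp (-checkLoss τ x)) =
      ENNReal.ofReal (exp (-t) / τ) := by
    rw [setLIntegral_congr_fun measurableSet_Ioi fun x hx => by
        rw [checkLoss_of_nonneg (hright.trans hx.le), ← neg_mul],
      setLIntegral_Ioi_ofReal_exp_mul (neg_neg_of_pos hτ0)]
    congr 1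
    field_simp
  rw [setOf_lt_checkLoss ⟨hτ0, hτ1⟩ ht, lintegral_union measurableSet_Ioi
      (Iio_disjoint_Ioi_of_le (hleft.trans hright)), hlower, hupper,
    ← ENNReal.ofReal_add (by positivity) (by positivity)]
  congr 1
  field_simp
  ring

theorem al_check_exponential_general {Ω : Type*} [MeasurableSpace Ω]
    (P : Measure Ω)
    (τ δ μ : ℝ) (hτ : τ ∈ Set.Ioo (0 : ℝ) 1) (hδ : 0 < δ)
    (Y : Ω → ℝ) (hY : Measurable Y)
    (hYlaw : P.map Y = volume.withDensity
      (fun y => ENNReal.ofReal (τ * (1 - τ) / δ * exp (-(checkLoss τ ((y - μ) / δ)))))) :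
    ∀ t : ℝ, 0 ≤ t →
      P {ω | t < checkLoss τ ((Y ω - μ) / δ)} = ENNReal.ofReal (exp (-t)) := by
  intro t ht
  have hτ' : 0 < τ * (1 - τ) := mul_pos hτ.1 (sub_pos.mpr hτ.2)
  have hT : MeasurableSet {x | t < checkLoss τ x} := by
    rw [setOf_lt_checkLoss hτ ht]
    exact measurableSet_Iio.union measurableSet_Ioi
  have hS := hT.preimage (f := fun y => (y - μ) / δ) (by fun_prop)
  calc P {ω | t < checkLoss τ ((Y ω - μ) / δ)}
      = P.map Y ((fun y => (y - μ) / δ) ⁻¹' {x | t < checkLoss τ x}) :=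
        (Measure.map_apply hY hS).symm
    _ = ENNReal.ofReal δ * ∫⁻ x in {x | t < checkLoss τ x},
          ENNReal.ofReal (τ * (1 - τ) / δ * exp (-checkLoss τ x)) := by
        rw [hYlaw, withDensity_apply _ hS]
        exact setLIntegral_comp_sub_div hδ μ
          (fun x => ENNReal.ofReal (τ * (1 - τ) / δ * exp (-checkLoss τ x))) _
    _ = ENNReal.ofReal δ * (ENNReal.ofReal (τ * (1 - τ) / δ) *
          ENNReal.ofReal (exp (-t) / (τ * (1 - τ)))) := by
        simp_rw [ENNReal.ofReal_mul (div_pos hτ' hδ).le]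
        rw [lintegral_const_mul' _ _ ENNReal.ofReal_ne_top,
          setLIntegral_exp_neg_checkLoss_tail hτ ht]
    _ = ENNReal.ofReal (exp (-t)) := by
        rw [← ENNReal.ofReal_mul (by positivity), ← ENNReal.ofReal_mul hδ.le]
        congr 1
        field_simp
        exact div_self hτ'.ne'

/-- If `Y` has the Asymmetric Laplace density `f_AL(y; μ, δ, τ)`, then
`ρ_τ((Y-μ)/δ)` is standard exponential: `P(ρ_τ((Y-μ)/δ) > t) = e^{-t}` for all `t ≥ 0`. -/
theorem al_check_exponential {Ω : Type*} [MeasurableSpace Ω]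
    (P : Measure Ω) [IsProbabilityMeasure P]
    (τ δ μ : ℝ) (hτ : τ ∈ Set.Ioo (0 : ℝ) 1) (hδ : 0 < δ)
    (Y : Ω → ℝ) (hY : Measurable Y)
    (hYlaw : P.map Y = volume.withDensity
      (fun y => ENNReal.ofReal (τ * (1 - τ) / δ * exp (-(checkLoss τ ((y - μ) / δ)))))) :
    ∀ t : ℝ, 0 ≤ t →
      P {ω | t < checkLoss τ ((Y ω - μ) / δ)} = ENNReal.ofReal (exp (-t)) :=
  al_check_exponential_general P τ δ μ hτ hδ Y hY hYlaw
end

section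
/- For all a > 0, b > 0 and p ∈ ℝ, ∫₀^∞ x^{p−1} exp(−(a x + b/x)/2) dx = 2 (b/a)^{p/2} K_p(√(a b)), where K_p(x) = ∫₀^∞ e^{−x cosh t} cosh(p t) dt. -/
/-!
The substitution `x = √(b/a) eᵗ` turns `a x + b / x` into `2 √(ab) cosh t`, so the integral
becomes `(b/a)^{p/2} ∫_ℝ e^{pt} e^{-√(ab) cosh t} dt`. As `cosh` is even, `e^{pt}` may be replaced
by its even part `cosh (pt)`, and the integral of that even function over `ℝ` is twice its
integral over `(0, ∞)`. The symmetrization needs integrability, which the Gaussian bound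
`t² / 4 ≤ cosh t` gives.
-/

open Real MeasureTheory

/-- The modified Bessel function of the third kind, via the integral representation
`K_ν(x) = ∫₀^∞ e^{-x cosh t} cosh(ν t) dt`. -/
noncomputable def besselK (ν x : ℝ) : ℝ :=
  ∫ t in Set.Ioi (0 : ℝ), exp (-x * cosh t) * cosh (ν * t)

lemma sq_div_four_le_cosh (t : ℝ) : t ^ 2 / 4 ≤ cosh t := by
  have h := quadratic_le_exp_of_nonneg (abs_nonneg t)
  rw [← cosh_abs, cosh_eq, ← sq_abs t]
  linarith [abs_nonneg t, exp_pos (-|t|)]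

lemma integrable_exp_mul_mul_exp_neg_mul_cosh (p : ℝ) {c : ℝ} (hc : 0 < c) :
    Integrable fun t : ℝ => exp (p * t) * exp (-c * cosh t) := by
  refine ((integrable_exp_neg_mul_sq (div_pos hc (by norm_num : (0 : ℝ) < 8))).const_mul
    (exp (2 * p ^ 2 / c))).mono' (by fun_prop) (.of_forall fun t => ?_)
  rw [norm_of_nonneg (by positivity), ← exp_add, ← exp_add, exp_le_exp]
  have hcosh := mul_le_mul_of_nonneg_left (sq_div_four_le_cosh t) hc.le
  have hlin : p * t ≤ c / 8 * t ^ 2 + 2 * p ^ 2 / c := by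
    rw [← sub_le_iff_le_add', le_div_iff₀ hc]
    nlinarith [sq_nonneg (c * t / 4 - p)]
  linarith

lemma integral_exp_mul_mul_exp_neg_mul_cosh (p : ℝ) {c : ℝ} (hc : 0 < c) :
    ∫ t, exp (p * t) * exp (-c * cosh t) = 2 * besselK p c := by
  have hflip : ∫ t, exp (-p * t) * exp (-c * cosh t) = ∫ t, exp (p * t) * exp (-c * cosh t) := by
    rw [← integral_neg_eq_self]
    simp only [mul_neg, neg_mul, neg_neg, cosh_neg]
  calc ∫ t, exp (p * t) * exp (-c * cosh t)
      = ((∫ t, exp (p * t) * exp (-c * cosh t)) + ∫ t, exp (-p * t) * exp (-c * cosh t)) / 2 := by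
        rw [hflip]; ring
    _ = ∫ t, exp (-c * cosh t) * cosh (p * t) := by
        rw [← integral_add (integrable_exp_mul_mul_exp_neg_mul_cosh p hc)
          (integrable_exp_mul_mul_exp_neg_mul_cosh (-p) hc), ← integral_div]
        congr with t
        rw [cosh_eq (p * t), neg_mul p]; ring
    _ = 2 * besselK p c := by
        rw [besselK, ← integral_comp_abs]
        congr with t
        rw [cosh_abs, ← cosh_abs (p * |t|), abs_mul, abs_abs, ← abs_mul, cosh_abs]

lemma integral_Ioi_zero_eq_integral_comp_mul_exp {E : Type*} [NormedAddCommGroup E]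
    [NormedSpace ℝ E] (g : ℝ → E) {r : ℝ} (hr : 0 < r) :
    ∫ x in Set.Ioi 0, g x = ∫ t, (r * exp t) • g (r * exp t) := by
  have himage : (fun t => r * exp t) '' Set.univ = Set.Ioi 0 := by
    ext x
    refine ⟨?_, fun hx => ⟨log (x / r), trivial, ?_⟩⟩
    · rintro ⟨t, -, rfl⟩
      exact mul_pos hr (exp_pos t)
    · simp only [exp_log (div_pos hx hr), mul_div_cancel₀ _ hr.ne']
  rw [← himage, integral_image_eq_integral_abs_deriv_smul MeasurableSet.univ
    (fun t _ => ((hasDerivAt_exp t).const_mul r).hasDerivWithinAt)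
    (fun _ _ _ _ h => exp_injective (mul_left_cancel₀ hr.ne' h)), setIntegral_univ]
  simp only [abs_of_pos (mul_pos hr (exp_pos _))]

lemma gig_integrand_comp_mul_exp {a b c r : ℝ} (p t : ℝ) (hr : 0 < r) (har : a * r = c)
    (hbr : b / r = c) :
    (r * exp t) * ((r * exp t) ^ (p - 1) * exp (-(a * (r * exp t) + b / (r * exp t)) / 2)) =
      r ^ p * (exp (p * t) * exp (-c * cosh t)) := by
  have hx : 0 < r * exp t := mul_pos hr (exp_pos t)
  have hexp : -(a * (r * exp t) + b / (r * exp t)) / 2 = -c * cosh t := by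
    rw [cosh_eq, exp_neg, ← mul_assoc, har, ← div_div, hbr]; ring
  rw [hexp, rpow_sub_one hx.ne', ← mul_assoc, mul_div_cancel₀ _ hx.ne',
    mul_rpow hr.le (exp_pos t).le, ← exp_mul, mul_comm t]
  ring

/-- Normalizing constant of the Generalized Inverse Gaussian distribution:
`∫₀^∞ x^{p-1} e^{-(ax + b/x)/2} dx = 2 (b/a)^{p/2} K_p(√(ab))` for `a, b > 0`. -/
theorem gig_normalizing_constant (a b p : ℝ) (ha : 0 < a) (hb : 0 < b) :
    ∫ x in Set.Ioi (0 : ℝ), x ^ (p - 1) * exp (-(a * x + b / x) / 2) =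
      2 * (b / a) ^ (p / 2) * besselK p (Real.sqrt (a * b)) := by
  have hr : 0 < √(b / a) := sqrt_pos.2 (div_pos hb ha)
  have har : a * √(b / a) = √(a * b) := by
    rw [← sqrt_mul_self ha.le, ← sqrt_mul (mul_self_nonneg a), sqrt_mul_self ha.le]
    field_simp
  have hbr : b / √(b / a) = √(a * b) := by
    rw [div_eq_iff hr.ne', ← har, mul_assoc, mul_self_sqrt (div_pos hb ha).le,
      mul_div_cancel₀ _ ha.ne']
  simp_rw [integral_Ioi_zero_eq_integral_comp_mul_exp _ hr, smul_eq_mul,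
    gig_integrand_comp_mul_exp p _ hr har hbr]
  rw [integral_const_mul, integral_exp_mul_mul_exp_neg_mul_cosh p (sqrt_pos.2 (mul_pos ha hb)),
    sqrt_eq_rpow, ← rpow_mul (div_pos hb ha).le]
  ring_nf
end

section
/- Let p, k, n ≥ 1, let z₁,…,z_n > 0 be positive weights, X₁,…,X_n ∈ ℝ^k, Y₁,…,Y_n ∈ ℝ^p, ξ ∈ ℝ^p, let D be a p×p diagonal matrix with strictly positive diagonal entries and Σ a p×p symmetric positive definite matrix, and suppose M = Σ_{i=1}^n z_i X_i X_iᵀ is invertible. For β ∈ ℝ^{p×k}, define Q(β) = Σ_{i=1}^n (Y_i − βX_i)ᵀ D^{−1}Σ^{−1} ξ − (1/2) Σ_{i=1}^n z_i (Y_i − βX_i)ᵀ (DΣD)^{−1} (Y_i − βX_i). Then the matrix β̂ ∈ ℝ^{p×k} defined by β̂ᵀ = M^{−1}(Σ_{i=1}^n z_i X_i Y_iᵀ − Σ_{i=1}^n X_i ξᵀ D) is the unique maximizer of Q: for every β ∈ ℝ^{p×k} with β ≠ β̂, Q(β) < Q(β̂). -/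
/-!
Write `rᵢ` for the residuals of `β̂`, `dᵢ = (β̂ - β) Xᵢ`, `S = (DΣD)⁻¹` and `v = D⁻¹Σ⁻¹ξ`.
Then `Q β` is an exact quadratic in the `dᵢ`: its linear part pairs `β̂ - β` with
`∑ᵢ (v - zᵢ S rᵢ) Xᵢᵀ`, the gradient of `Q` at `β̂`, and the closed form of `β̂` says precisely
that this gradient vanishes. Hence `Q β = Q β̂ - ½ ∑ᵢ zᵢ dᵢᵀ S dᵢ`. As `S` is positive definite
and the weights are positive, the defect vanishes only if every `dᵢ = 0`, i.e. `(β̂ - β) M = 0`,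
which forces `β = β̂` since `M` is invertible.
-/

open Matrix

namespace Matrix

variable {ι l m R : Type*} [Fintype ι] [Fintype l]

lemma sum_mulVec_dotProduct [Fintype m] [CommRing R] (Δ : Matrix m l R) (x : ι → l → R)
    (w : ι → m → R) :
    ∑ i, (Δ *ᵥ x i) ⬝ᵥ w i = trace (Δ * ∑ i, vecMulVec (x i) (w i)) := by
  simp_rw [Matrix.mul_sum, trace_sum, mul_vecMulVec, trace_vecMulVec]

lemma add_dotProduct_mulVec_add [Fintype m] [CommRing R] {S : Matrix m m R} (hS : Sᵀ = S)
    (r d : m → R) :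
    (r + d) ⬝ᵥ (S *ᵥ (r + d)) = r ⬝ᵥ (S *ᵥ r) + 2 * (d ⬝ᵥ (S *ᵥ r)) + d ⬝ᵥ (S *ᵥ d) := by
  have hsymm : r ⬝ᵥ (S *ᵥ d) = d ⬝ᵥ (S *ᵥ r) := by
    rw [dotProduct_mulVec, ← mulVec_transpose, hS, dotProduct_comm]
  rw [mulVec_add, dotProduct_add, add_dotProduct, add_dotProduct, hsymm]
  ring

lemma sum_vecMulVec_smul_mulVec_sub_mulVec [Fintype m] [CommRing R] (z : ι → R)
    (x : ι → l → R) (y : ι → m → R) (S : Matrix m m R) (β : Matrix m l R) :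
    ∑ i, vecMulVec (x i) (z i • S *ᵥ (y i - β *ᵥ x i)) =
      (∑ i, z i • vecMulVec (x i) (y i) - (∑ i, z i • vecMulVec (x i) (x i)) * βᵀ) * Sᵀ := by
  rw [Matrix.sum_mul, ← Finset.sum_sub_distrib, Matrix.sum_mul]
  refine Finset.sum_congr rfl fun i _ => ?_
  rw [Matrix.smul_mul, ← smul_sub, Matrix.smul_mul, vecMulVec_mul, vecMul_transpose,
    ← vecMulVec_sub, vecMulVec_mul, vecMul_transpose, vecMulVec_smul]

lemma exists_mulVec_ne_zero_of_isUnit_det [CommRing R] [DecidableEq l] {Δ : Matrix m l R}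
    (hΔ : Δ ≠ 0) (z : ι → R) (x : ι → l → R)
    (hM : IsUnit (∑ i, z i • vecMulVec (x i) (x i)).det) : ∃ i, Δ *ᵥ x i ≠ 0 := by
  by_contra! hker
  have hΔM : Δ * ∑ i, z i • vecMulVec (x i) (x i) = 0 := by
    simp [Matrix.mul_sum, mul_vecMulVec, hker]
  exact hΔ <| by rw [← mul_nonsing_inv_cancel_right _ Δ hM, hΔM, Matrix.zero_mul]

lemma sum_mul_dotProduct_mulVec_pos [Fintype m] {S : Matrix m m ℝ} (hS : S.PosDef) {z : ι → ℝ}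
    (hz : ∀ i, 0 < z i) {d : ι → m → ℝ} (hd : ∃ i, d i ≠ 0) :
    0 < ∑ i, z i * (d i ⬝ᵥ (S *ᵥ d i)) := by
  obtain ⟨i₀, hi₀⟩ := hd
  refine Finset.sum_pos' (fun i _ => ?_) ⟨i₀, Finset.mem_univ _, ?_⟩
  · simpa using mul_nonneg (hz i).le (hS.posSemidef.dotProduct_mulVec_nonneg (d i))
  · simpa using mul_pos (hz i₀) (hS.dotProduct_mulVec_pos hi₀)

lemma PosDef.diagonal_mul_mul_diagonal [Fintype m] [DecidableEq m] {A : Matrix m m ℝ}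
    (hA : A.PosDef) {δ : m → ℝ} (hδ : ∀ j, δ j ≠ 0) : (diagonal δ * A * diagonal δ).PosDef := by
  have hinj : Function.Injective (diagonal δ).mulVec :=
    mulVec_injective_iff_isUnit.mpr <| isUnit_diagonal.mpr <|
      Pi.isUnit_iff.mpr fun j => (hδ j).isUnit
  simpa using hA.conjTranspose_mul_mul_same hinj

end Matrix

section MStep

variable {ι l m : Type*} [Fintype ι] [Fintype l] [Fintype m]

/-- The paper's `Q`, with `S` standing for `(DΣD)⁻¹` and `v` for `D⁻¹Σ⁻¹ξ`. -/
noncomputable def mstepObjective (z : ι → ℝ) (X : ι → l → ℝ) (Y : ι → m → ℝ) (v : m → ℝ)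
    (S : Matrix m m ℝ) (β : Matrix m l ℝ) : ℝ :=
  (∑ i, (Y i - β *ᵥ X i) ⬝ᵥ v) -
    (1 / 2) * ∑ i, z i * ((Y i - β *ᵥ X i) ⬝ᵥ (S *ᵥ (Y i - β *ᵥ X i)))

lemma mstepObjective_eq_sub_of_stationary {z : ι → ℝ} {X : ι → l → ℝ} {Y : ι → m → ℝ}
    {v : m → ℝ} {S : Matrix m m ℝ} (hS : Sᵀ = S) {βhat : Matrix m l ℝ}
    (hstat : ∑ i, vecMulVec (X i) (z i • S *ᵥ (Y i - βhat *ᵥ X i)) = ∑ i, vecMulVec (X i) v)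
    (β : Matrix m l ℝ) :
    mstepObjective z X Y v S β = mstepObjective z X Y v S βhat -
      (1 / 2) * ∑ i, z i * (((βhat - β) *ᵥ X i) ⬝ᵥ (S *ᵥ ((βhat - β) *ᵥ X i))) := by
  set r := fun i => Y i - βhat *ᵥ X i
  set d := fun i => (βhat - β) *ᵥ X i
  have hresid : ∀ i, Y i - β *ᵥ X i = r i + d i := fun i => by
    simp only [r, d, sub_mulVec]; abel
  have hlinear : ∑ i, d i ⬝ᵥ v = ∑ i, z i * (d i ⬝ᵥ (S *ᵥ r i)) := by
    simp_rw [d, sum_mulVec_dotProduct, ← hstat, ← sum_mulVec_dotProduct, dotProduct_smul,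
      smul_eq_mul, r]
  have hcross : ∑ i, z i * (2 * (d i ⬝ᵥ (S *ᵥ r i))) = 2 * ∑ i, d i ⬝ᵥ v := by
    simp_rw [hlinear, Finset.mul_sum, mul_left_comm]
  simp only [mstepObjective, hresid, add_dotProduct, add_dotProduct_mulVec_add hS, mul_add,
    Finset.sum_add_distrib, hcross]
  ring

theorem mstepObjective_lt_of_stationary [DecidableEq l] {z : ι → ℝ} (hz : ∀ i, 0 < z i)
    {X : ι → l → ℝ} {Y : ι → m → ℝ} {v : m → ℝ} {S : Matrix m m ℝ} (hS : S.PosDef)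
    (hM : IsUnit (∑ i, z i • vecMulVec (X i) (X i)).det) {βhat : Matrix m l ℝ}
    (hstat : ∑ i, vecMulVec (X i) (z i • S *ᵥ (Y i - βhat *ᵥ X i)) = ∑ i, vecMulVec (X i) v)
    {β : Matrix m l ℝ} (hβ : β ≠ βhat) :
    mstepObjective z X Y v S β < mstepObjective z X Y v S βhat := by
  have hS_symm : Sᵀ = S := by simpa using hS.isHermitian.eq
  have hfit := exists_mulVec_ne_zero_of_isUnit_det (sub_ne_zero.mpr hβ.symm) z X hM
  rw [mstepObjective_eq_sub_of_stationary hS_symm hstat β]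
  linarith [sum_mul_dotProduct_mulVec_pos hS hz hfit]

end MStep

theorem em_mstep_beta_unique_maximizer_general (p k n : ℕ)
    (z : Fin n → ℝ) (hz : ∀ i, 0 < z i)
    (X : Fin n → Fin k → ℝ) (Y : Fin n → Fin p → ℝ) (ξ : Fin p → ℝ)
    (δ : Fin p → ℝ) (hδ : ∀ j, 0 < δ j)
    (D : Matrix (Fin p) (Fin p) ℝ) (hD : D = diagonal δ)
    (A : Matrix (Fin p) (Fin p) ℝ) (hA : A.PosDef)
    (M : Matrix (Fin k) (Fin k) ℝ)
    (hM : M = ∑ i, z i • vecMulVec (X i) (X i)) (hMinv : IsUnit M.det)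
    (Q : Matrix (Fin p) (Fin k) ℝ → ℝ)
    (hQ : Q = fun β =>
      (∑ i, (Y i - β *ᵥ X i) ⬝ᵥ ((D⁻¹ * A⁻¹) *ᵥ ξ)) -
        (1 / 2) * ∑ i, z i * ((Y i - β *ᵥ X i) ⬝ᵥ ((D * A * D)⁻¹ *ᵥ (Y i - β *ᵥ X i))))
    (βhat : Matrix (Fin p) (Fin k) ℝ)
    (hβhat : βhatᵀ =
      M⁻¹ * (∑ i, z i • vecMulVec (X i) (Y i) - ∑ i, vecMulVec (X i) (ξ ᵥ* D))) :
    ∀ β : Matrix (Fin p) (Fin k) ℝ, β ≠ βhat → Q β < Q βhat := by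
  intro β hβ
  have hD_symm : Dᵀ = D := hD ▸ diagonal_transpose δ
  have hD_det : IsUnit D.det := by
    rw [hD, det_diagonal]
    exact (Finset.prod_pos fun j _ => hδ j).ne'.isUnit
  have hS : (D * A * D)⁻¹.PosDef := (hD ▸ hA.diagonal_mul_mul_diagonal fun j => (hδ j).ne').inv
  have hv : (ξ ᵥ* D) ᵥ* ((D * A * D)⁻¹)ᵀ = (D⁻¹ * A⁻¹) *ᵥ ξ := by
    rw [vecMul_vecMul, ← vecMul_transpose, transpose_mul, transpose_nonsing_inv,
      transpose_nonsing_inv, transpose_nonsing_inv, transpose_mul, transpose_mul, hD_symm,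
      Matrix.mul_inv_rev, Matrix.mul_inv_rev, ← Matrix.mul_assoc,
      mul_nonsing_inv_cancel_left _ _ hD_det]
  have hnormal : M * βhatᵀ =
      ∑ i, z i • vecMulVec (X i) (Y i) - ∑ i, vecMulVec (X i) (ξ ᵥ* D) := by
    rw [hβhat, mul_nonsing_inv_cancel_left _ _ hMinv]
  have hstat : ∑ i, vecMulVec (X i) (z i • (D * A * D)⁻¹ *ᵥ (Y i - βhat *ᵥ X i)) =
      ∑ i, vecMulVec (X i) ((D⁻¹ * A⁻¹) *ᵥ ξ) := by
    rw [sum_vecMulVec_smul_mulVec_sub_mulVec, ← hM, hnormal, sub_sub_cancel, Matrix.sum_mul]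
    simp_rw [vecMulVec_mul, hv]
  subst hQ hM
  exact mstepObjective_lt_of_stationary hz hS hMinv hstat hβ

/-- Closed-form M-step update for the regression coefficient matrix (Proposition 4): the
matrix `β̂` with `β̂ᵀ = M⁻¹(∑ᵢ zᵢ Xᵢ Yᵢᵀ - ∑ᵢ Xᵢ ξᵀ D)`, where `M = ∑ᵢ zᵢ Xᵢ Xᵢᵀ`, is the
unique maximizer of the part `Q` of the expected complete log-likelihood that depends on
the regression coefficients. -/
theorem em_mstep_beta_unique_maximizer (p k n : ℕ) (hp : 1 ≤ p) (hk : 1 ≤ k) (hn : 1 ≤ n)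
    (z : Fin n → ℝ) (hz : ∀ i, 0 < z i)
    (X : Fin n → Fin k → ℝ) (Y : Fin n → Fin p → ℝ) (ξ : Fin p → ℝ)
    (δ : Fin p → ℝ) (hδ : ∀ j, 0 < δ j)
    (D : Matrix (Fin p) (Fin p) ℝ) (hD : D = diagonal δ)
    (A : Matrix (Fin p) (Fin p) ℝ) (hA : A.PosDef)
    (M : Matrix (Fin k) (Fin k) ℝ)
    (hM : M = ∑ i, z i • vecMulVec (X i) (X i)) (hMinv : IsUnit M.det)
    (Q : Matrix (Fin p) (Fin k) ℝ → ℝ)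
    (hQ : Q = fun β =>
      (∑ i, (Y i - β *ᵥ X i) ⬝ᵥ ((D⁻¹ * A⁻¹) *ᵥ ξ)) -
        (1 / 2) * ∑ i, z i * ((Y i - β *ᵥ X i) ⬝ᵥ ((D * A * D)⁻¹ *ᵥ (Y i - β *ᵥ X i))))
    (βhat : Matrix (Fin p) (Fin k) ℝ)
    (hβhat : βhatᵀ =
      M⁻¹ * (∑ i, z i • vecMulVec (X i) (Y i) - ∑ i, vecMulVec (X i) (ξ ᵥ* D))) :
    ∀ β : Matrix (Fin p) (Fin k) ℝ, β ≠ βhat → Q β < Q βhat :=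
  em_mstep_beta_unique_maximizer_general p k n z hz X Y ξ δ hδ D hD A hA M hM hMinv Q hQ βhat hβhat
end
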